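/- Let μ ∈ (0,1) and s ∈ (0, μ), and define θ : [0, ∞) → ℝ by θ(τ) = π + τ − arctan(μ²τ/s² − √(μ²/s² − 1)) − arctan(√(μ²/s² − 1)). Then θ(0) = π and θ'(0) = 0; i.e., the Focal Line tributary enters the Focal Line (the line θ = π) tangentially. -/

import Mathlib

open Real

lemma hasDerivAt_arctan_mul_sub (c b x : ℝ) :
    HasDerivAt (fun τ => arctan (c * τ - b)) (c / (1 + (c * x - b) ^ 2)) x := by
  have h := (((hasDerivAt_id x).const_mul c).sub_const b).arctan
  simpa [div_eq_inv_mul] using h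

lemma one_add_sq_sqrt_sub_one {x : ℝ} (hx : 1 ≤ x) : 1 + √(x - 1) ^ 2 = x := by
  rw [sq_sqrt (sub_nonneg.mpr hx)]
  ring

/-- At `τ = 0` the arctangent term has slope `(1 + a ^ 2) / (1 + (-a) ^ 2) = 1`. -/
lemma hasDerivAt_sub_arctan_one_add_sq_mul_sub (a : ℝ) :
    HasDerivAt (fun τ => τ - arctan ((1 + a ^ 2) * τ - a)) 0 0 := by
  have h := hasDerivAt_arctan_mul_sub (1 + a ^ 2) a 0
  rw [mul_zero, zero_sub, neg_sq, div_self (by positivity)] at h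
  have h' := (hasDerivAt_id' (0 : ℝ)).sub h
  rwa [sub_self] at h'

theorem stmt_13_general (μ s : ℝ) (hs : s ∈ Set.Ioo 0 μ)
    (θ : ℝ → ℝ)
    (hθ : ∀ τ : ℝ, θ τ =
      Real.pi + τ - Real.arctan (μ ^ 2 * τ / s ^ 2 - Real.sqrt (μ ^ 2 / s ^ 2 - 1))
        - Real.arctan (Real.sqrt (μ ^ 2 / s ^ 2 - 1))) :
    θ 0 = Real.pi ∧ HasDerivAt θ 0 0 := by
  refine ⟨by simp [hθ], ?_⟩
  set a := √(μ ^ 2 / s ^ 2 - 1)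
  have hratio : 1 ≤ μ ^ 2 / s ^ 2 := by
    rw [one_le_div (pow_pos hs.1 2)]
    exact pow_le_pow_left₀ hs.1.le hs.2.le 2
  have hθ' : θ = fun τ => π + (τ - arctan ((1 + a ^ 2) * τ - a)) - arctan a := by
    funext τ
    rw [hθ, one_add_sq_sqrt_sub_one hratio, mul_div_right_comm, add_sub_assoc]
  simpa [hθ'] using
    ((hasDerivAt_sub_arctan_one_add_sq_mul_sub a).const_add π).sub_const (arctan a)

/-- For `μ ∈ (0,1)`, `s ∈ (0,μ)` and
`θ(τ) = π + τ − arctan(μ²τ/s² − √(μ²/s² − 1)) − arctan(√(μ²/s² − 1))`: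
`θ(0) = π` and `θ'(0) = 0`, i.e. the Focal Line tributary enters the Focal Line
(the line `θ = π`) tangentially. -/
theorem stmt_13 (μ s : ℝ) (hμ : μ ∈ Set.Ioo (0 : ℝ) 1) (hs : s ∈ Set.Ioo 0 μ)
    (θ : ℝ → ℝ)
    (hθ : ∀ τ : ℝ, θ τ =
      Real.pi + τ - Real.arctan (μ ^ 2 * τ / s ^ 2 - Real.sqrt (μ ^ 2 / s ^ 2 - 1))
        - Real.arctan (Real.sqrt (μ ^ 2 / s ^ 2 - 1))) :
    θ 0 = Real.pi ∧ HasDerivAt θ 0 0 :=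
  stmt_13_general μ s hs θ hθ
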